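/- Let H = L²(0,1), let Γ be the operator defined by Γf(x) = Σ_n e^{n²} f̂(n) e^{2πinx} on its natural domain (where f̂(n) are the Fourier coefficients of f), with associated space H^1(Γ) = {f : Σ_n e^{n²}|f̂(n)|² < ∞}, and let L be the bounded operator of multiplication by x, (Lf)(x) = x f(x). Then L is bounded on H (so ‖Lψ‖ ≤ C‖ψ‖_{H^1(Γ)} holds automatically), but the unitary operator e^{2πiL}, which acts by (e^{2πiL}f)(x) = e^{2πix}f(x) and in particular maps e^{2πinx} to e^{2πi(n+1)x}, is not bounded from H^1(Γ) to H^1(Γ). Hence the condition ‖Lψ‖ ≤ C‖ψ‖_{H^1(Γ)} does not imply the condition ‖e^{iLt}ψ‖_{H^1(Γ)} ≤ B(t)‖ψ‖_{H^1(Γ)}. -/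
import Mathlib


open MeasureTheory Filter Set

noncomputable section

variable {H : Type*} [NormedAddCommGroup H] [InnerProductSpace ℂ H] [CompleteSpace H]

/-- A strongly continuous one-parameter unitary group `t ↦ U t = e^{iLt}` on `H`. -/
structure UnitaryGroup (H : Type*) [NormedAddCommGroup H] [InnerProductSpace ℂ H]
    [CompleteSpace H] where
  /-- the unitary operator `e^{iLt}` -/
  U : ℝ → (H ≃ₗᵢ[ℂ] H)
  map_zero : ∀ ψ, U 0 ψ = ψ
  map_add : ∀ s t ψ, U (s + t) ψ = U s (U t ψ)
  strong_cont : ∀ ψ, Continuous fun t => U t ψ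

/-- Membership in the Sobolev space `H¹(Γ)` associated with the operator
`Γ f(x) = ∑_n e^{n²} f̂(n) e^{2πinx}` on `H = L²(0,1)`: in terms of the Fourier basis
`e n = e^{2πinx}` (an orthonormal basis of eigenvectors of `Γ` with eigenvalues
`e^{n²}`) it reads `∑_n e^{n²} |f̂(n)|² < ∞`. -/
def MemH1Gamma (e : HilbertBasis ℤ ℂ H) (ψ : H) : Prop :=
  Summable fun n : ℤ => Real.exp ((n : ℝ) ^ 2) * ‖e.repr ψ n‖ ^ 2

/-- The `H¹(Γ)` norm `‖ψ‖₁ = (∑_n e^{n²} |f̂(n)|²)^{1/2}`. -/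
def h1GammaNorm (e : HilbertBasis ℤ ℂ H) (ψ : H) : ℝ :=
  Real.sqrt (∑' n : ℤ, Real.exp ((n : ℝ) ^ 2) * ‖e.repr ψ n‖ ^ 2)

set_option linter.unusedSectionVars false in
lemma basis_fun_eq (e : HilbertBasis ℤ ℂ H) (n : ℤ) :
    (fun m : ℤ => Real.exp ((m : ℝ) ^ 2) * ‖e.repr (e n) m‖ ^ 2)
      = fun m : ℤ => if m = n then Real.exp ((n : ℝ) ^ 2) else 0 := by
  funext m
  rw [e.repr_self]
  by_cases h : m = n
  · subst h; rw [lp.single_apply_self]; simp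
  · rw [lp.single_apply_ne 2 n _ h]; simp [h]

lemma memH1_basis (e : HilbertBasis ℤ ℂ H) (n : ℤ) : MemH1Gamma e (e n) := by
  rw [MemH1Gamma, basis_fun_eq]
  apply summable_of_ne_finset_zero (s := {n})
  intro m hm
  simp_all

lemma h1norm_basis (e : HilbertBasis ℤ ℂ H) (n : ℤ) :
    h1GammaNorm e (e n) = Real.exp ((n : ℝ) ^ 2 / 2) := by
  rw [h1GammaNorm, basis_fun_eq, tsum_ite_eq]
  rw [show Real.exp ((n : ℝ) ^ 2) = Real.exp ((n : ℝ) ^ 2 / 2) ^ 2 by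
    rw [← Real.exp_nat_mul]; ring_nf]
  exact Real.sqrt_sq (Real.exp_pos _).le


/-- **(Example at the end of Section 2.)**  On `H = L²(0,1)`, with the Fourier basis
`e n = e^{2πinx}` and `Γ` the operator with eigenvalues `e^{n²}` on this basis, let
`L` be the bounded operator of multiplication by `x` and `G.U t = e^{iLt}`, so that
`e^{2πiL}` is multiplication by `e^{2πix}` and maps `e n` to `e (n+1)`.  Then the
condition `‖Lψ‖ ≤ C‖ψ‖_{H¹(Γ)}` holds, but `e^{2πiL}` is not bounded on `H¹(Γ)`:
condition (2.1) does not imply condition (2.2). -/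
theorem bounded_mult_op_with_unbounded_H1_group
    (e : HilbertBasis ℤ ℂ H)
    (L : H →L[ℂ] H) (G : UnitaryGroup H)
    (hgen : ∀ ψ : H, HasDerivAt (fun t => G.U t ψ) (Complex.I • L ψ) 0)
    (hshift : ∀ n : ℤ, G.U (2 * Real.pi) (e n) = e (n + 1)) :
    (∃ C : ℝ, ∀ ψ : H, MemH1Gamma e ψ → ‖L ψ‖ ≤ C * h1GammaNorm e ψ) ∧
      ∀ b : ℝ, ∃ ψ : H, MemH1Gamma e ψ ∧ MemH1Gamma e (G.U (2 * Real.pi) ψ) ∧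
        b * h1GammaNorm e ψ < h1GammaNorm e (G.U (2 * Real.pi) ψ) := by
  constructor
  · refine ⟨‖L‖, fun ψ hψ => ?_⟩
    have hs : HasSum (fun n : ℤ => ‖e.repr ψ n‖ ^ (2 : ENNReal).toReal)
        (‖e.repr ψ‖ ^ (2 : ENNReal).toReal) := lp.hasSum_norm (by norm_num) _
    simp only [ENNReal.toReal_ofNat, Real.rpow_two, e.repr.norm_map] at hs
    have hsq : Real.sqrt (‖ψ‖ ^ 2) ≤ h1GammaNorm e ψ := by
      apply Real.sqrt_le_sqrt
      rw [← hs.tsum_eq]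
      refine Summable.tsum_le_tsum (fun n => ?_) hs.summable hψ
      calc ‖e.repr ψ n‖ ^ 2 = 1 * ‖e.repr ψ n‖ ^ 2 := (one_mul _).symm
        _ ≤ Real.exp ((n : ℝ) ^ 2) * ‖e.repr ψ n‖ ^ 2 :=
            mul_le_mul_of_nonneg_right (Real.one_le_exp (sq_nonneg _)) (by positivity)
    rw [Real.sqrt_sq (norm_nonneg _)] at hsq
    calc ‖L ψ‖ ≤ ‖L‖ * ‖ψ‖ := L.le_opNorm ψ
      _ ≤ ‖L‖ * h1GammaNorm e ψ := by gcongr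
  · intro b
    obtain ⟨n, hn⟩ : ∃ n : ℤ, b ≤ (n : ℝ) := ⟨⌈b⌉, Int.le_ceil b⟩
    refine ⟨e n, memH1_basis e n, ?_, ?_⟩
    · rw [hshift]; exact memH1_basis e _
    · rw [hshift, h1norm_basis, h1norm_basis]
      have key : Real.exp (((n : ℝ) + 1) ^ 2 / 2)
          = Real.exp ((n : ℝ) ^ 2 / 2) * Real.exp ((n : ℝ) + 1 / 2) := by
        rw [← Real.exp_add]; ring_nf
      push_cast
      rw [key]
      have hb : b < Real.exp ((n : ℝ) + 1 / 2) := by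
        have := Real.add_one_le_exp ((n : ℝ) + 1 / 2)
        linarith
      calc b * Real.exp ((n : ℝ) ^ 2 / 2)
          < Real.exp ((n : ℝ) + 1 / 2) * Real.exp ((n : ℝ) ^ 2 / 2) := by
            exact mul_lt_mul_of_pos_right hb (Real.exp_pos _)
        _ = _ := by ring
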